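/- The generating function for permutations counted by length (variable z) and number of marked bonds (variable u) is A(z,u) = Σ_{m≥0} m! · (z + 2z²u/(1 − zu))^m; i.e., the coefficient of z^n u^m in A equals the number of pairs (π, M) with π ∈ S_n and M a set of m bonds of π. -/

import Mathlib

/-- The entry at position `k` of `σ` (0-indexed) is a *vertical separator*:
there are positions `j, j+1, j+2` with `k = j+1` and `|σ j - σ (j+2)| = 1`. -/
def IsVSepPos {n : ℕ} (σ : Equiv.Perm (Fin n)) (k : Fin n) : Prop :=
  ∃ (j : ℕ) (h : j + 2 < n), (k : ℕ) = j + 1 ∧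
    (((σ ⟨j, by omega⟩).val : ℤ) - ((σ ⟨j + 2, h⟩).val : ℤ)).natAbs = 1

/-- The value `b` is a vertical separator of `σ`. -/
def IsVSepVal {n : ℕ} (σ : Equiv.Perm (Fin n)) (b : Fin n) : Prop :=
  IsVSepPos σ (σ⁻¹ b)

/-- The value `a` is a *horizontal separator* of `σ`: the values `a-1` and `a+1`
occupy adjacent positions of `σ` (their sum is `2a` and they differ by `2`). -/
def IsHSepVal {n : ℕ} (σ : Equiv.Perm (Fin n)) (a : Fin n) : Prop :=
  ∃ (j : ℕ) (h : j + 1 < n),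
    (((σ ⟨j, by omega⟩).val : ℤ) - ((σ ⟨j + 1, h⟩).val : ℤ)).natAbs = 2 ∧
    ((σ ⟨j, by omega⟩).val : ℤ) + ((σ ⟨j + 1, h⟩).val : ℤ) = 2 * (a : ℤ)

/-- `σ` has a bond at positions `j, j+1`. -/
def PermBondAt {n : ℕ} (σ : Equiv.Perm (Fin n)) (j : ℕ) (h : j + 1 < n) : Prop :=
  (((σ ⟨j, by omega⟩).val : ℤ) - ((σ ⟨j + 1, h⟩).val : ℤ)).natAbs = 1

/-- The sequence obtained from `σ` by deleting the entry at position `p`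
and standardizing. -/
def delSeq {n : ℕ} (σ : Equiv.Perm (Fin n)) (p : Fin n) : Fin (n - 1) → ℕ :=
  fun k =>
    let q : Fin n :=
      if (k : ℕ) < (p : ℕ) then ⟨k, by have := k.isLt; omega⟩
      else ⟨(k : ℕ) + 1, by have := k.isLt; omega⟩
    if (σ q).val < (σ p).val then (σ q).val else (σ q).val - 1

/-- A sequence has a bond at positions `j, j+1`. -/
def SeqBondAt {m : ℕ} (g : Fin m → ℕ) (j : ℕ) (h : j + 1 < m) : Prop :=
  ((g ⟨j, by omega⟩ : ℤ) - (g ⟨j + 1, h⟩ : ℤ)).natAbs = 1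

/-- The number of bonds of a sequence. -/
noncomputable def seqBondCount {m : ℕ} (g : Fin m → ℕ) : ℕ :=
  Nat.card {p : Fin m × Fin m //
    (p.2 : ℕ) = (p.1 : ℕ) + 1 ∧ ((g p.1 : ℤ) - (g p.2 : ℤ)).natAbs = 1}

/-- The number of bonds of `σ`. -/
noncomputable def bondCount {n : ℕ} (σ : Equiv.Perm (Fin n)) : ℕ :=
  Nat.card {p : Fin n × Fin n //
    (p.2 : ℕ) = (p.1 : ℕ) + 1 ∧ (((σ p.1).val : ℤ) - ((σ p.2).val : ℤ)).natAbs = 1}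

open PowerSeries in
/-- The series `z + 2z²u + 2z³u² + ⋯ = z + 2z²u/(1-zu)`, as an element of
`ℚ[[u]][[z]]` (outer variable `z`, inner variable `u`). -/
noncomputable def runGF : PowerSeries (PowerSeries ℚ) :=
  PowerSeries.mk fun j =>
    if j = 0 then 0
    else if j = 1 then 1
    else 2 * (PowerSeries.X : PowerSeries ℚ) ^ (j - 1)

/-!
Cut a marked permutation into blocks, the maximal intervals of positions joined by marked bonds.
A chain of bonds through distinct values is monotone, so every block is a run of consecutive
values, increasing or decreasing, and a marked permutation of size `n` with `k` blocks has
`n - k` marks. The block through the maximum `n - 1` carries the values `n - s, …, n - 1`;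
removing it leaves a marked permutation of size `n - s` with `k - 1` blocks, and conversely a run
of size `s` (in either orientation if `s ≥ 2`) can be inserted at any of the `k` places that do
not separate the two entries of a marked bond. So the number `c(n, k)` of marked permutations
with `k` blocks satisfies `c(n, k + 1) = (k + 1) ∑ₛ w(s) c(n - s, k)`, with `w(1) = 1` and
`w(s) = 2` for `s ≥ 2`, which is the recursion of the coefficient of `zⁿ uⁿ⁻ᵏ` in
`k! (z + 2z²u/(1 - zu))ᵏ`.
-/

open Finset PowerSeries

def runWeight : ℕ → ℕ
  | 0 => 0
  | 1 => 1
  | _ + 2 => 2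

/-- `compositionWeight n k` counts the compositions of `n` into `k` positive parts, each part of
size at least `2` counted twice (once for each orientation of a run of that length). -/
def compositionWeight : ℕ → ℕ → ℕ
  | n, 0 => if n = 0 then 1 else 0
  | n, k + 1 => ∑ s ∈ range (n + 1), runWeight s * compositionWeight (n - s) k

lemma compositionWeight_eq_zero_of_lt {n k : ℕ} (h : n < k) : compositionWeight n k = 0 := by
  induction k generalizing n with
  | zero => omega
  | succ k ih =>
    refine sum_eq_zero fun s hsn => ?_
    rcases Nat.eq_zero_or_pos s with rfl | hs
    · rw [runWeight, zero_mul]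
    · rw [ih (by have := mem_range.mp hsn; omega), mul_zero]

lemma coeff_runGF (j : ℕ) : coeff j runGF = C (runWeight j : ℚ) * X ^ (j - 1) := by
  rcases j with _ | _ | j <;> simp [runGF, runWeight, map_ofNat]

lemma coeff_runGF_pow (n k : ℕ) :
    coeff n (runGF ^ k) = C (compositionWeight n k : ℚ) * X ^ (n - k) := by
  induction k generalizing n with
  | zero => by_cases h : n = 0 <;> simp [coeff_one, compositionWeight, h]
  | succ k ih =>
    have hterm : ∀ s ∈ range (n + 1), coeff s runGF * coeff (n - s) (runGF ^ k) =
        C ((runWeight s * compositionWeight (n - s) k : ℕ) : ℚ) * X ^ (n - (k + 1)) := by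
      intro s hsn
      rw [mem_range] at hsn
      rw [coeff_runGF, ih]
      rcases Nat.eq_zero_or_pos s with rfl | hs
      · simp [runWeight]
      rcases lt_or_ge (n - s) k with hk | hk
      · simp [compositionWeight_eq_zero_of_lt hk]
      rw [mul_mul_mul_comm, ← map_mul, ← pow_add, Nat.cast_mul,
        show s - 1 + (n - s - k) = n - (k + 1) by omega]
    rw [pow_succ', coeff_mul, Nat.sum_antidiagonal_eq_sum_range_succ_mk, sum_congr rfl hterm,
      ← sum_mul, ← map_sum, compositionWeight]
    push_cast
    rfl

lemma sum_factorial_mul_coeff_runGF_pow (n m : ℕ) :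
    ∑ k ∈ range (n + 1), (k.factorial : ℚ) * coeff m (coeff n (runGF ^ k)) =
      ((if m ≤ n then (n - m).factorial * compositionWeight n (n - m) else 0 : ℕ) : ℚ) := by
  simp_rw [coeff_runGF_pow, coeff_C_mul_X_pow]
  split_ifs with hmn
  · rw [sum_eq_single (n - m)
      (fun k hk _ => by rw [if_neg (by have := mem_range.mp hk; omega), mul_zero])
      (fun h => absurd (mem_range.mpr (by omega)) h), if_pos (by omega)]
    push_cast
    rfl
  · exact sum_eq_zero fun k _ => by rw [if_neg (by omega), mul_zero]

namespace MarkedPerm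

def IsBond (f : ℕ → ℕ) (q : ℕ) : Prop := ((f q : ℤ) - f (q + 1)).natAbs = 1

def IsMarking (n : ℕ) (f : ℕ → ℕ) (M : Finset ℕ) : Prop := ∀ q ∈ M, q + 1 < n ∧ IsBond f q

lemma IsMarking.congr {n : ℕ} {f g : ℕ → ℕ} {M : Finset ℕ} (hf : IsMarking n f M)
    (hfg : Set.EqOn f g (Set.Iio n)) : IsMarking n g M := by
  intro q hq
  obtain ⟨hqn, hbond⟩ := hf q hq
  refine ⟨hqn, ?_⟩
  rwa [IsBond, ← hfg (show q < n by omega), ← hfg (show q + 1 < n from hqn)]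

lemma card_le_of_isMarking {n : ℕ} {f : ℕ → ℕ} {M : Finset ℕ} (hM : IsMarking n f M) :
    #M ≤ n - 1 := by
  have hsub : M ⊆ range (n - 1) := fun q hq => mem_range.mpr (by have := (hM q hq).1; omega)
  simpa using card_le_card hsub

def cutOut (p s : ℕ) (f : ℕ → ℕ) (x : ℕ) : ℕ := if x < p then f x else f (x + s)

/-- The word `h` is read at the positions `p, …, p + s - 1` it occupies after the splice. -/
def splice (p s : ℕ) (h g : ℕ → ℕ) (x : ℕ) : ℕ :=
  if x < p then g x else if x < p + s then h x else g (x - s)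

lemma cutOut_splice (p s : ℕ) (h g : ℕ → ℕ) : cutOut p s (splice p s h g) = g := by
  funext x
  by_cases hx : x < p
  · simp [cutOut, splice, hx]
  · simp [cutOut, splice, hx, show ¬ x + s < p by omega]

lemma splice_cutOut {p s : ℕ} {h f : ℕ → ℕ} (hf : ∀ x, p ≤ x → x < p + s → h x = f x) :
    splice p s h (cutOut p s f) = f := by
  funext x
  simp only [splice, cutOut]
  split_ifs <;> first | rfl | exact hf x (by omega) (by omega) | omega | congr 1; omega

lemma eqOn_cutOut {n p s : ℕ} {f f' : ℕ → ℕ} (hf : Set.EqOn f f' (Set.Iio n)) :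
    Set.EqOn (cutOut p s f) (cutOut p s f') (Set.Iio (n - s)) := by
  intro x hx
  simp only [Set.mem_Iio] at hx
  simp only [cutOut]
  split_ifs
  · exact hf (show x < n by omega)
  · exact hf (show x + s < n by omega)

lemma eqOn_splice {n p s : ℕ} {h g g' : ℕ → ℕ} (hp : p + s ≤ n)
    (hg : Set.EqOn g g' (Set.Iio (n - s))) :
    Set.EqOn (splice p s h g) (splice p s h g') (Set.Iio n) := by
  intro x hx
  simp only [Set.mem_Iio] at hx
  simp only [splice]
  split_ifs
  · exact hg (show x < n - s by omega)
  · rfl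
  · exact hg (show x - s < n - s by omega)

def cutMarks (p s : ℕ) (M : Finset ℕ) : Finset ℕ :=
  {q ∈ M | q < p} ∪ {q ∈ M | p + s ≤ q}.image (· - s)

def spliceMarks (p s : ℕ) (M : Finset ℕ) : Finset ℕ :=
  {q ∈ M | q < p} ∪ Ico p (p + s - 1) ∪ {q ∈ M | p ≤ q}.image (· + s)

lemma mem_cutMarks {p s q : ℕ} {M : Finset ℕ} :
    q ∈ cutMarks p s M ↔ q < p ∧ q ∈ M ∨ p ≤ q ∧ q + s ∈ M := by
  simp only [cutMarks, mem_union, mem_filter, mem_image]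
  constructor
  · rintro (⟨hq, hqp⟩ | ⟨q', ⟨hq', hpq'⟩, rfl⟩)
    · exact Or.inl ⟨hqp, hq⟩
    · exact Or.inr ⟨by omega, by rwa [Nat.sub_add_cancel (by omega)]⟩
  · rintro (⟨hqp, hq⟩ | ⟨hpq, hq⟩)
    · exact Or.inl ⟨hq, hqp⟩
    · exact Or.inr ⟨q + s, ⟨hq, by omega⟩, by omega⟩

lemma mem_spliceMarks {p s q : ℕ} {M : Finset ℕ} :
    q ∈ spliceMarks p s M ↔
      q < p ∧ q ∈ M ∨ p ≤ q ∧ q + 1 < p + s ∨ p + s ≤ q ∧ q - s ∈ M := by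
  simp only [spliceMarks, mem_union, mem_filter, mem_Ico, mem_image]
  constructor
  · rintro ((⟨hq, hqp⟩ | ⟨hpq, hqs⟩) | ⟨q', ⟨hq', hpq'⟩, rfl⟩)
    · exact Or.inl ⟨hqp, hq⟩
    · exact Or.inr (Or.inl ⟨hpq, by omega⟩)
    · exact Or.inr (Or.inr ⟨by omega, by rwa [Nat.add_sub_cancel]⟩)
  · rintro (⟨hqp, hq⟩ | ⟨hpq, hqs⟩ | ⟨hpq, hq⟩)
    · exact Or.inl (Or.inl ⟨hq, hqp⟩)
    · exact Or.inl (Or.inr ⟨hpq, by omega⟩)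
    · exact Or.inr ⟨q - s, ⟨hq, by omega⟩, by omega⟩

lemma cutMarks_spliceMarks (p s : ℕ) (M : Finset ℕ) : cutMarks p s (spliceMarks p s M) = M := by
  ext q
  simp only [mem_cutMarks, mem_spliceMarks, Nat.add_sub_cancel]
  constructor
  · rintro (⟨_, ⟨_, hq⟩ | ⟨_, _⟩ | ⟨_, _⟩⟩ | ⟨_, ⟨_, _⟩ | ⟨_, _⟩ | ⟨_, hq⟩⟩) <;>
      first | assumption | omega
  · intro hq
    by_cases hqp : q < p
    · exact Or.inl ⟨hqp, Or.inl ⟨hqp, hq⟩⟩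
    · exact Or.inr ⟨by omega, Or.inr (Or.inr ⟨by omega, hq⟩)⟩

lemma spliceMarks_cutMarks {p s : ℕ} {M : Finset ℕ}
    (hblock : ∀ q, p ≤ q → q + 1 < p + s → q ∈ M) (hend : p + s - 1 ∉ M) :
    spliceMarks p s (cutMarks p s M) = M := by
  ext q
  simp only [mem_cutMarks, mem_spliceMarks]
  constructor
  · rintro (⟨_, ⟨_, hq⟩ | ⟨_, _⟩⟩ | ⟨hpq, hqs⟩ | ⟨_, ⟨_, _⟩ | ⟨_, hq⟩⟩)
    · exact hq
    · omega
    · exact hblock q hpq hqs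
    · omega
    · rwa [Nat.sub_add_cancel (by omega)] at hq
  · intro hq
    by_cases hqp : q < p
    · exact Or.inl ⟨hqp, Or.inl ⟨hqp, hq⟩⟩
    by_cases hqs : q + 1 < p + s
    · exact Or.inr (Or.inl ⟨by omega, hqs⟩)
    have : q ≠ p + s - 1 := fun h => hend (h ▸ hq)
    exact Or.inr (Or.inr ⟨by omega, Or.inr ⟨by omega, by rwa [Nat.sub_add_cancel (by omega)]⟩⟩)

lemma card_spliceMarks (p s : ℕ) (M : Finset ℕ) :
    #(spliceMarks p s M) = #M + (s - 1) := by
  have hlow : Disjoint {q ∈ M | q < p} (Ico p (p + s - 1)) :=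
    disjoint_left.mpr fun q hq hq' => by simp only [mem_filter, mem_Ico] at hq hq'; omega
  have hhigh : Disjoint ({q ∈ M | q < p} ∪ Ico p (p + s - 1)) ({q ∈ M | p ≤ q}.image (· + s)) :=
    disjoint_left.mpr fun q hq hq' => by
      simp only [mem_union, mem_filter, mem_Ico, mem_image] at hq hq'
      omega
  have hsplit : #{q ∈ M | q < p} + #{q ∈ M | p ≤ q} = #M := by
    simpa only [not_lt] using card_filter_add_card_filter_not (s := M) (fun q => q < p)
  rw [spliceMarks, card_union_of_disjoint hhigh, card_union_of_disjoint hlow, Nat.card_Ico,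
    card_image_of_injective _ (add_left_injective s)]
  omega

lemma isMarking_cutOut {n p s : ℕ} {f : ℕ → ℕ} {M : Finset ℕ} (hM : IsMarking n f M)
    (hp : p + s ≤ n) (hstart : ∀ q ∈ M, q + 1 ≠ p) :
    IsMarking (n - s) (cutOut p s f) (cutMarks p s M) := by
  intro q hq
  rcases mem_cutMarks.mp hq with ⟨hqp, hq⟩ | ⟨hpq, hq⟩
  · obtain ⟨hqn, hbond⟩ := hM q hq
    have hqp' : q + 1 < p := by have := hstart q hq; omega
    refine ⟨by omega, ?_⟩
    simpa [IsBond, cutOut, hqp, hqp'] using hbond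
  · obtain ⟨hqn, hbond⟩ := hM (q + s) hq
    refine ⟨by omega, ?_⟩
    simpa [IsBond, cutOut, show ¬ q < p by omega, show ¬ q + 1 < p by omega,
      show q + 1 + s = q + s + 1 by omega] using hbond

lemma isMarking_splice {n p s : ℕ} {h g : ℕ → ℕ} {M : Finset ℕ} (hM : IsMarking (n - s) g M)
    (hp : p + s ≤ n) (hgap : ∀ q ∈ M, q + 1 ≠ p)
    (hh : ∀ q, p ≤ q → q + 1 < p + s → IsBond h q) :
    IsMarking n (splice p s h g) (spliceMarks p s M) := by
  intro q hq
  rcases mem_spliceMarks.mp hq with ⟨hqp, hq⟩ | ⟨hpq, hqs⟩ | ⟨hpq, hq⟩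
  · obtain ⟨hqn, hbond⟩ := hM q hq
    have hqp' : q + 1 < p := by have := hgap q hq; omega
    refine ⟨by omega, ?_⟩
    simpa [IsBond, splice, hqp, hqp'] using hbond
  · refine ⟨by omega, ?_⟩
    simpa [IsBond, splice, show ¬ q < p by omega, show q < p + s by omega,
      show ¬ q + 1 < p by omega, hqs] using hh q hpq hqs
  · obtain ⟨hqn, hbond⟩ := hM (q - s) hq
    refine ⟨by omega, ?_⟩
    simpa [IsBond, splice, show ¬ q < p by omega, show ¬ q < p + s by omega,
      show ¬ q + 1 < p by omega, show ¬ q + 1 < p + s by omega,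
      show q + 1 - s = q - s + 1 by omega] using hbond

section Permutations

variable {n : ℕ}

/-- `σ` as a word on `ℕ`; past position `n - 1` it reads the junk value `n`. -/
def permFun (σ : Equiv.Perm (Fin n)) (x : ℕ) : ℕ := if h : x < n then σ ⟨x, h⟩ else n

lemma permFun_lt (σ : Equiv.Perm (Fin n)) {x : ℕ} (hx : x < n) : permFun σ x < n := by
  simp [permFun, hx]

lemma permFun_injOn (σ : Equiv.Perm (Fin n)) : Set.InjOn (permFun σ) (Set.Iio n) := by
  intro x hx y hy hxy
  simp only [Set.mem_Iio] at hx hy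
  simpa [permFun, hx, hy, Fin.val_inj] using hxy

lemma permFun_permFun_inv (σ : Equiv.Perm (Fin n)) {y : ℕ} (hy : y < n) :
    permFun σ (permFun σ⁻¹ y) = y := by
  simp [permFun, hy]

open scoped Classical in
noncomputable def ofFun (n : ℕ) (f : ℕ → ℕ) : Equiv.Perm (Fin n) :=
  if h : Set.MapsTo f (Set.Iio n) (Set.Iio n) ∧ Set.InjOn f (Set.Iio n) then
    Equiv.ofBijective (fun x => ⟨f x, h.1 x.isLt⟩) <| Finite.injective_iff_bijective.mp
      fun x y hxy => Fin.ext (h.2 x.isLt y.isLt (congrArg Fin.val hxy))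
  else 1

lemma permFun_ofFun {f : ℕ → ℕ} (hmaps : Set.MapsTo f (Set.Iio n) (Set.Iio n))
    (hinj : Set.InjOn f (Set.Iio n)) : Set.EqOn (permFun (ofFun n f)) f (Set.Iio n) := by
  intro x hx
  simp only [Set.mem_Iio] at hx
  simp [permFun, ofFun, hx, hmaps, hinj]

lemma ofFun_eq_of_eqOn {f : ℕ → ℕ} (σ : Equiv.Perm (Fin n))
    (hf : Set.EqOn f (permFun σ) (Set.Iio n)) : ofFun n f = σ := by
  have hmaps : Set.MapsTo f (Set.Iio n) (Set.Iio n) :=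
    hf.symm.mapsTo_iff.mp fun x hx => permFun_lt σ hx
  have hinj : Set.InjOn f (Set.Iio n) := hf.symm.injOn_iff.mp (permFun_injOn σ)
  ext x
  have := (permFun_ofFun hmaps hinj).trans hf x.isLt
  simpa [permFun] using this

end Permutations

lemma mapsTo_cutOut {n p s : ℕ} {f : ℕ → ℕ}
    (hout : ∀ x < n, x < p ∨ p + s ≤ x → f x < n - s) :
    Set.MapsTo (cutOut p s f) (Set.Iio (n - s)) (Set.Iio (n - s)) := by
  intro x hx
  simp only [Set.mem_Iio, cutOut] at hx ⊢
  split_ifs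
  · exact hout x (by omega) (by omega)
  · exact hout (x + s) (by omega) (by omega)

lemma injOn_cutOut {n p s : ℕ} {f : ℕ → ℕ} (hf : Set.InjOn f (Set.Iio n)) :
    Set.InjOn (cutOut p s f) (Set.Iio (n - s)) := by
  intro x hx y hy hxy
  simp only [Set.mem_Iio, cutOut] at hx hy hxy
  split_ifs at hxy <;>
    have := hf (by simp only [Set.mem_Iio]; omega) (by simp only [Set.mem_Iio]; omega) hxy <;>
    omega

lemma mapsTo_splice {n p s : ℕ} {h g : ℕ → ℕ} (hp : p + s ≤ n)
    (hg : Set.MapsTo g (Set.Iio (n - s)) (Set.Iio (n - s)))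
    (hh : ∀ x, p ≤ x → x < p + s → h x < n) :
    Set.MapsTo (splice p s h g) (Set.Iio n) (Set.Iio n) := by
  have hlt : ∀ x < n - s, g x < n - s := fun x hx => hg hx
  intro x hx
  simp only [Set.mem_Iio, splice] at hx ⊢
  split_ifs
  · have := hlt x (by omega); omega
  · exact hh x (by omega) (by omega)
  · have := hlt (x - s) (by omega); omega

lemma injOn_splice {n p s : ℕ} {h g : ℕ → ℕ} (hp : p + s ≤ n)
    (hg : Set.MapsTo g (Set.Iio (n - s)) (Set.Iio (n - s))) (hginj : Set.InjOn g (Set.Iio (n - s)))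
    (hh : ∀ x, p ≤ x → x < p + s → n - s ≤ h x) (hhinj : Set.InjOn h (Set.Ico p (p + s))) :
    Set.InjOn (splice p s h g) (Set.Iio n) := by
  have hlt : ∀ x < n - s, g x < n - s := fun x hx => hg hx
  intro x hx y hy hxy
  simp only [Set.mem_Iio, splice] at hx hy hxy
  -- letters from `g` are below `n - s`, letters from `h` are not
  split_ifs at hxy
  all_goals first
    | exact hhinj ⟨by omega, by omega⟩ ⟨by omega, by omega⟩ hxy
    | have := hginj (show _ ∈ Set.Iio (n - s) by simp only [Set.mem_Iio]; omega)
        (show _ ∈ Set.Iio (n - s) by simp only [Set.mem_Iio]; omega) hxy; omega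
    | have := hlt x (by omega); have := hh y (by omega) (by omega); omega
    | have := hlt (x - s) (by omega); have := hh y (by omega) (by omega); omega
    | have := hlt y (by omega); have := hh x (by omega) (by omega); omega
    | have := hlt (y - s) (by omega); have := hh x (by omega) (by omega); omega

/-- On a block of length `s` with an endpoint at `t`, this is the monotone run through the values
`n - s, …, n - 1` that peaks at `t`. -/
def topRun (n t x : ℕ) : ℕ := n - 1 - Nat.dist x t

section TopRun

variable {n p s t : ℕ}

lemma topRun_bounds (hp : p + s ≤ n) (ht : p ≤ t ∧ t < p + s) {x : ℕ} (hx : p ≤ x ∧ x < p + s) :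
    n - s ≤ topRun n t x ∧ topRun n t x < n := by
  simp only [topRun, Nat.dist]
  omega

lemma injOn_topRun (hp : p + s ≤ n) (ht : t = p ∨ t = p + s - 1) :
    Set.InjOn (topRun n t) (Set.Ico p (p + s)) := by
  intro x hx y hy hxy
  simp only [Set.mem_Ico, topRun, Nat.dist] at hx hy hxy
  omega

lemma isBond_topRun (hp : p + s ≤ n) (ht : p ≤ t ∧ t < p + s) {q : ℕ} (hq : p ≤ q ∧ q + 1 < p + s) :
    IsBond (topRun n t) q := by
  simp only [IsBond, topRun, Nat.dist]
  omega

end TopRun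

lemma add_eq_of_unit_steps {g : ℕ → ℕ} {L : ℕ}
    (hstep : ∀ j < L, ((g j : ℤ) - g (j + 1)).natAbs = 1) (hinj : Set.InjOn g (Set.Iic L))
    (hle : ∀ j ≤ L, g j ≤ g 0) : ∀ j ≤ L, g j + j = g 0 := by
  intro j hj
  induction j using Nat.strong_induction_on with
  | _ j ih =>
    match j with
    | 0 => rfl
    | 1 =>
      have : ((g 0 : ℤ) - g 1).natAbs = 1 := hstep 0 (by omega)
      have := hle 1 hj
      omega
    | j + 2 =>
      have h1 := ih (j + 1) (by omega) (by omega)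
      have h0 := ih j (by omega) (by omega)
      have hne : g (j + 2) ≠ g j := fun h =>
        absurd (hinj (show j + 2 ∈ Set.Iic L from hj) (show j ∈ Set.Iic L by
          simp only [Set.mem_Iic]; omega) h) (by omega)
      have : ((g (j + 1) : ℤ) - g (j + 2)).natAbs = 1 := hstep (j + 1) (by omega)
      omega

section Runs

variable {f : ℕ → ℕ} {a e t : ℕ}

lemma add_dist_eq_of_isBond (ht : a ≤ t ∧ t ≤ e) (hbond : ∀ q, a ≤ q → q < e → IsBond f q)
    (hinj : Set.InjOn f (Set.Icc a e)) (hle : ∀ x, a ≤ x → x ≤ e → f x ≤ f t)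
    {x : ℕ} (hx : a ≤ x ∧ x ≤ e) : f x + Nat.dist x t = f t := by
  rcases le_total t x with htx | hxt
  · have := add_eq_of_unit_steps (g := fun j => f (t + j)) (L := e - t)
      (fun j hj => hbond (t + j) (by omega) (by omega))
      (fun i hi j hj hij => by
        simp only [Set.mem_Iic] at hi hj
        have := hinj (show t + i ∈ Set.Icc a e by simp only [Set.mem_Icc]; omega)
          (show t + j ∈ Set.Icc a e by simp only [Set.mem_Icc]; omega) hij
        omega)
      (fun j hj => by simpa using hle (t + j) (by omega) (by omega)) (x - t) (by omega)
    simp only [Nat.add_sub_cancel' htx, Nat.add_zero] at this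
    rwa [Nat.dist_eq_sub_of_le_right htx]
  · have := add_eq_of_unit_steps (g := fun j => f (t - j)) (L := t - a)
      (fun j hj => by
        have := hbond (t - (j + 1)) (by omega) (by omega)
        simp only [IsBond, show t - (j + 1) + 1 = t - j by omega] at this
        omega)
      (fun i hi j hj hij => by
        simp only [Set.mem_Iic] at hi hj
        have := hinj (show t - i ∈ Set.Icc a e by simp only [Set.mem_Icc]; omega)
          (show t - j ∈ Set.Icc a e by simp only [Set.mem_Icc]; omega) hij
        omega)
      (fun j hj => by simpa using hle (t - j) (by omega) (by omega)) (t - x) (by omega)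
    simp only [Nat.sub_sub_self hxt, Nat.sub_zero] at this
    rwa [Nat.dist_eq_sub_of_le hxt]

lemma eq_left_or_right_of_isBond (ht : a ≤ t ∧ t ≤ e) (hbond : ∀ q, a ≤ q → q < e → IsBond f q)
    (hinj : Set.InjOn f (Set.Icc a e)) (hle : ∀ x, a ≤ x → x ≤ e → f x ≤ f t) :
    t = a ∨ t = e := by
  by_contra! h
  have hl := add_dist_eq_of_isBond ht hbond hinj hle (x := t - 1) (by omega)
  have hr := add_dist_eq_of_isBond ht hbond hinj hle (x := t + 1) (by omega)
  rw [Nat.dist_eq_sub_of_le (by omega)] at hl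
  rw [Nat.dist_eq_sub_of_le_right (by omega)] at hr
  have := hinj (show t - 1 ∈ Set.Icc a e by simp only [Set.mem_Icc]; omega)
    (show t + 1 ∈ Set.Icc a e by simp only [Set.mem_Icc]; omega) (by omega)
  omega

end Runs

section Blocks

variable {M : Finset ℕ} {t : ℕ}

/-- First position of the block of `M` through position `t`, a block being a maximal interval of
positions joined by the marks (a mark `q` joins `q` and `q + 1`). -/
def blockStart (M : Finset ℕ) (t : ℕ) : ℕ := Nat.findGreatest (fun a => ∀ q ∈ M, q + 1 ≠ a) t

lemma exists_le_notMem (M : Finset ℕ) (t : ℕ) : ∃ e, t ≤ e ∧ e ∉ M := by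
  obtain ⟨e, he⟩ := Infinite.exists_notMem_finset (M ∪ range t)
  simp only [mem_union, mem_range, not_or, not_lt] at he
  exact ⟨e, he.2, he.1⟩

def blockEnd (M : Finset ℕ) (t : ℕ) : ℕ := Nat.find (exists_le_notMem M t)

lemma blockStart_le : blockStart M t ≤ t := Nat.findGreatest_le t

lemma ne_blockStart : ∀ q ∈ M, q + 1 ≠ blockStart M t :=
  Nat.findGreatest_spec (P := fun a => ∀ q ∈ M, q + 1 ≠ a) (Nat.zero_le t) (by simp)

lemma mem_of_blockStart_le {q : ℕ} (h₁ : blockStart M t ≤ q) (h₂ : q < t) : q ∈ M := by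
  by_contra hq
  exact Nat.findGreatest_is_greatest (P := fun a => ∀ q ∈ M, q + 1 ≠ a) (n := t) (k := q + 1)
    (show blockStart M t < q + 1 by omega) (by omega)
    fun q' hq' h => hq (by rwa [← Nat.succ_injective h])

lemma le_blockEnd : t ≤ blockEnd M t := (Nat.find_spec (exists_le_notMem M t)).1

lemma blockEnd_notMem : blockEnd M t ∉ M := (Nat.find_spec (exists_le_notMem M t)).2

lemma mem_of_lt_blockEnd {q : ℕ} (h₁ : t ≤ q) (h₂ : q < blockEnd M t) : q ∈ M := by
  by_contra hq
  exact Nat.find_min (exists_le_notMem M t) h₂ ⟨h₁, hq⟩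

lemma blockEnd_lt {n : ℕ} (hM : ∀ q ∈ M, q + 1 < n) (ht : t < n) : blockEnd M t < n := by
  have : blockEnd M t ≤ n - 1 :=
    Nat.find_min' _ ⟨by omega, fun h => by have := hM _ h; omega⟩
  omega

lemma blockStart_eq {a : ℕ} (hat : a ≤ t) (hstart : ∀ q ∈ M, q + 1 ≠ a)
    (hmem : ∀ q, a ≤ q → q < t → q ∈ M) : blockStart M t = a :=
  Nat.findGreatest_eq_iff.mpr ⟨hat, fun _ => hstart, fun b hab hbt hb =>
    hb (b - 1) (hmem (b - 1) (by omega) (by omega)) (by omega)⟩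

lemma blockEnd_eq {e : ℕ} (hte : t ≤ e) (hend : e ∉ M) (hmem : ∀ q, t ≤ q → q < e → q ∈ M) :
    blockEnd M t = e :=
  (Nat.find_eq_iff _).mpr ⟨⟨hte, hend⟩, fun q hqe hq => hq.2 (hmem q hq.1 hqe)⟩

end Blocks

section TopBlock

variable {n : ℕ} {σ : Equiv.Perm (Fin n)} {M : Finset ℕ}

def maxPos (σ : Equiv.Perm (Fin n)) : ℕ := permFun σ⁻¹ (n - 1)

def topStart (σ : Equiv.Perm (Fin n)) (M : Finset ℕ) : ℕ := blockStart M (maxPos σ)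

def topEnd (σ : Equiv.Perm (Fin n)) (M : Finset ℕ) : ℕ := blockEnd M (maxPos σ)

def topSize (σ : Equiv.Perm (Fin n)) (M : Finset ℕ) : ℕ := topEnd σ M + 1 - topStart σ M

lemma maxPos_lt (hn : 0 < n) : maxPos σ < n := permFun_lt σ⁻¹ (by omega)

lemma permFun_maxPos (hn : 0 < n) : permFun σ (maxPos σ) = n - 1 := permFun_permFun_inv σ (by omega)

lemma maxPos_eq {x : ℕ} (hx : x < n) (h : permFun σ x = n - 1) : maxPos σ = x := by
  have hn : 0 < n := by omega
  exact permFun_injOn σ (maxPos_lt hn) hx (by rw [permFun_maxPos hn, h])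

lemma topStart_le_maxPos : topStart σ M ≤ maxPos σ := blockStart_le

lemma maxPos_le_topEnd : maxPos σ ≤ topEnd σ M := le_blockEnd

lemma topStart_add_topSize : topStart σ M + topSize σ M = topEnd σ M + 1 := by
  have := topStart_le_maxPos (σ := σ) (M := M)
  have := maxPos_le_topEnd (σ := σ) (M := M)
  rw [topSize]
  omega

lemma topSize_pos : 0 < topSize σ M := by
  have := topStart_le_maxPos (σ := σ) (M := M)
  have := maxPos_le_topEnd (σ := σ) (M := M)
  rw [topSize]
  omega

lemma ne_topStart : ∀ q ∈ M, q + 1 ≠ topStart σ M := ne_blockStart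

lemma topEnd_lt (hn : 0 < n) (hM : IsMarking n (permFun σ) M) : topEnd σ M < n :=
  blockEnd_lt (fun q hq => (hM q hq).1) (maxPos_lt hn)

lemma mem_of_topStart_le {q : ℕ} (h₁ : topStart σ M ≤ q) (h₂ : q < topEnd σ M) : q ∈ M := by
  rcases lt_or_ge q (maxPos σ) with h | h
  · exact mem_of_blockStart_le h₁ h
  · exact mem_of_lt_blockEnd h h₂

lemma permFun_le_permFun_maxPos (hn : 0 < n) {x : ℕ} (hx : x < n) :
    permFun σ x ≤ permFun σ (maxPos σ) := by
  rw [permFun_maxPos hn]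
  have := permFun_lt σ hx
  omega

lemma injOn_permFun_top (hn : 0 < n) (hM : IsMarking n (permFun σ) M) :
    Set.InjOn (permFun σ) (Set.Icc (topStart σ M) (topEnd σ M)) :=
  have := topEnd_lt hn hM
  (permFun_injOn σ).mono fun y hy => by simp only [Set.mem_Icc, Set.mem_Iio] at hy ⊢; omega

lemma permFun_add_dist_maxPos (hn : 0 < n) (hM : IsMarking n (permFun σ) M) {x : ℕ}
    (hx : topStart σ M ≤ x ∧ x ≤ topEnd σ M) :
    permFun σ x + Nat.dist x (maxPos σ) = n - 1 := by
  have := topEnd_lt hn hM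
  rw [← permFun_maxPos (σ := σ) hn]
  exact add_dist_eq_of_isBond ⟨topStart_le_maxPos, maxPos_le_topEnd⟩
    (fun q h₁ h₂ => (hM q (mem_of_topStart_le h₁ h₂)).2) (injOn_permFun_top hn hM)
    (fun y _ hy => permFun_le_permFun_maxPos hn (by omega)) hx

lemma maxPos_eq_topStart_or_topEnd (hn : 0 < n) (hM : IsMarking n (permFun σ) M) :
    maxPos σ = topStart σ M ∨ maxPos σ = topEnd σ M := by
  have := topEnd_lt hn hM
  exact eq_left_or_right_of_isBond ⟨topStart_le_maxPos, maxPos_le_topEnd⟩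
    (fun q h₁ h₂ => (hM q (mem_of_topStart_le h₁ h₂)).2) (injOn_permFun_top hn hM)
    (fun y _ hy => permFun_le_permFun_maxPos hn (by omega))

/-- The top block carries the values `n - topSize, …, n - 1`, so every other entry is smaller. -/
lemma permFun_lt_sub_topSize (hn : 0 < n) (hM : IsMarking n (permFun σ) M) {x : ℕ} (hx : x < n)
    (hout : x < topStart σ M ∨ topEnd σ M < x) : permFun σ x < n - topSize σ M := by
  have hs := topStart_le_maxPos (σ := σ) (M := M)
  have he := maxPos_le_topEnd (σ := σ) (M := M)
  have hend := topEnd_lt hn hM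
  have hfx := permFun_lt σ hx
  by_contra! hge
  rw [topSize] at hge
  obtain ⟨y, hy₁, hy₂, hyd⟩ : ∃ y, topStart σ M ≤ y ∧ y ≤ topEnd σ M ∧
      Nat.dist y (maxPos σ) = n - 1 - permFun σ x := by
    simp only [Nat.dist]
    rcases maxPos_eq_topStart_or_topEnd hn hM with h | h
    · exact ⟨maxPos σ + (n - 1 - permFun σ x), by omega, by omega, by omega⟩
    · exact ⟨maxPos σ - (n - 1 - permFun σ x), by omega, by omega, by omega⟩
  have hfy := permFun_add_dist_maxPos hn hM ⟨hy₁, hy₂⟩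
  have := permFun_injOn σ (show x ∈ Set.Iio n from hx) (show y ∈ Set.Iio n by
    simp only [Set.mem_Iio]; omega) (by omega)
  omega

end TopBlock

open scoped Classical in
/-- Marked permutations of size `n` with `k` blocks, that is, with `n - k` marks. -/
noncomputable def markedPerms (n k : ℕ) : Finset (Equiv.Perm (Fin n) × Finset ℕ) :=
  {x ∈ univ ×ˢ (range n).powerset | IsMarking n (permFun x.1) x.2 ∧ #x.2 + k = n}

lemma mem_markedPerms {n k : ℕ} {x : Equiv.Perm (Fin n) × Finset ℕ} :
    x ∈ markedPerms n k ↔ IsMarking n (permFun x.1) x.2 ∧ #x.2 + k = n := by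
  simp only [markedPerms, mem_filter, mem_product, mem_univ, mem_powerset, true_and,
    and_iff_right_iff_imp]
  exact fun hx q hq => mem_range.mpr (by have := (hx.1 q hq).1; omega)

/-- The positions at which a block can be inserted into a word of length `n` without separating
the two letters of a mark of `M`. -/
def gaps (n : ℕ) (M : Finset ℕ) : Finset ℕ := {p ∈ range (n + 1) | ∀ q ∈ M, q + 1 ≠ p}

lemma mem_gaps {n p : ℕ} {M : Finset ℕ} : p ∈ gaps n M ↔ p ≤ n ∧ ∀ q ∈ M, q + 1 ≠ p := by
  simp [gaps]

lemma card_gaps {n : ℕ} {M : Finset ℕ} (hM : ∀ q ∈ M, q + 1 < n) : #(gaps n M) = n + 1 - #M := by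
  have hgaps : gaps n M = range (n + 1) \ M.image (· + 1) := by
    ext p
    simp only [gaps, mem_filter, mem_sdiff, mem_image, not_exists, not_and]
  have hsub : M.image (· + 1) ⊆ range (n + 1) := fun p hp => by
    obtain ⟨q, hq, rfl⟩ := mem_image.mp hp
    exact mem_range.mpr (by have := hM q hq; omega)
  rw [hgaps, card_sdiff_of_subset hsub, card_range,
    card_image_of_injective _ (add_left_injective 1)]

lemma card_offsets {s : ℕ} (hs : 1 ≤ s) : #({0, s - 1} : Finset ℕ) = runWeight s := by
  obtain _ | _ | s := s
  · omega
  · rfl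
  · exact card_pair (by omega)

/-- The data left when the top block (the block through the maximum `n - 1`) of size `s` is cut
out: a marked permutation with one block fewer, the position `p` of the cut, and the offset of
the maximum inside the cut block, `0` for a decreasing and `s - 1` for an increasing run. -/
noncomputable def insertionData (n s k : ℕ) :
    Finset (Σ _ : Equiv.Perm (Fin (n - s)) × Finset ℕ, ℕ × ℕ) :=
  (markedPerms (n - s) k).sigma fun y => gaps (n - s) y.2 ×ˢ {0, s - 1}

lemma mem_insertionData {n s k : ℕ} {y : Σ _ : Equiv.Perm (Fin (n - s)) × Finset ℕ, ℕ × ℕ} :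
    y ∈ insertionData n s k ↔
      y.1 ∈ markedPerms (n - s) k ∧ y.2.1 ∈ gaps (n - s) y.1.2 ∧
        y.2.2 ∈ ({0, s - 1} : Finset ℕ) := by
  rw [insertionData, mem_sigma, mem_product]

lemma card_insertionData {n s k : ℕ} (hs : 1 ≤ s) :
    #(insertionData n s k) = runWeight s * ((k + 1) * #(markedPerms (n - s) k)) := by
  have hfiber : ∀ y ∈ markedPerms (n - s) k,
      #(gaps (n - s) y.2 ×ˢ ({0, s - 1} : Finset ℕ)) = runWeight s * (k + 1) := by
    intro y hy
    obtain ⟨hM, hcard⟩ := mem_markedPerms.mp hy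
    rw [card_product, card_gaps fun q hq => (hM q hq).1, card_offsets hs,
      show n - s + 1 - #y.2 = k + 1 by omega, mul_comm]
  rw [insertionData, card_sigma, sum_congr rfl hfiber, sum_const, smul_eq_mul]
  ring

noncomputable def removeTop {n : ℕ} (s : ℕ) (σ : Equiv.Perm (Fin n)) (M : Finset ℕ) :
    Σ _ : Equiv.Perm (Fin (n - s)) × Finset ℕ, ℕ × ℕ :=
  ⟨(ofFun (n - s) (cutOut (topStart σ M) s (permFun σ)), cutMarks (topStart σ M) s M),
    (topStart σ M, maxPos σ - topStart σ M)⟩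

noncomputable def insertTop (n s : ℕ) (y : Σ _ : Equiv.Perm (Fin (n - s)) × Finset ℕ, ℕ × ℕ) :
    Equiv.Perm (Fin n) × Finset ℕ :=
  (ofFun n (splice y.2.1 s (topRun n (y.2.1 + y.2.2)) (permFun y.1.1)), spliceMarks y.2.1 s y.1.2)

section RemoveTop

variable {n : ℕ} {σ : Equiv.Perm (Fin n)} {M : Finset ℕ}

lemma eqOn_permFun_removeTop (hn : 0 < n) (hM : IsMarking n (permFun σ) M) :
    Set.EqOn (permFun (removeTop (topSize σ M) σ M).1.1)
      (cutOut (topStart σ M) (topSize σ M) (permFun σ)) (Set.Iio (n - topSize σ M)) := by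
  have := topStart_add_topSize (σ := σ) (M := M)
  have := topEnd_lt hn hM
  exact permFun_ofFun
    (mapsTo_cutOut fun x hx hout => permFun_lt_sub_topSize hn hM hx (by omega))
    (injOn_cutOut (permFun_injOn σ))

lemma spliceMarks_cutMarks_topStart :
    spliceMarks (topStart σ M) (topSize σ M) (cutMarks (topStart σ M) (topSize σ M) M) = M := by
  have := topStart_add_topSize (σ := σ) (M := M)
  refine spliceMarks_cutMarks (fun q h₁ h₂ => mem_of_topStart_le h₁ (by omega)) ?_
  rw [show topStart σ M + topSize σ M - 1 = topEnd σ M by omega]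
  exact blockEnd_notMem

lemma removeTop_mem {k : ℕ} (hM : IsMarking n (permFun σ) M) (hcard : #M + (k + 1) = n) :
    removeTop (topSize σ M) σ M ∈ insertionData n (topSize σ M) k := by
  have hn : 0 < n := by omega
  have := topStart_add_topSize (σ := σ) (M := M)
  have := topEnd_lt hn hM
  have := topSize_pos (σ := σ) (M := M)
  have hcut :=
    card_spliceMarks (topStart σ M) (topSize σ M) (cutMarks (topStart σ M) (topSize σ M) M)
  rw [spliceMarks_cutMarks_topStart] at hcut
  simp only [mem_insertionData, mem_markedPerms, mem_gaps, removeTop]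
  refine ⟨⟨(isMarking_cutOut hM (by omega) ne_topStart).congr
    (eqOn_permFun_removeTop hn hM).symm, by omega⟩, ⟨by omega, ?_⟩, ?_⟩
  · intro q hq
    rcases mem_cutMarks.mp hq with ⟨_, hq⟩ | ⟨hq, _⟩
    · exact ne_topStart q hq
    · omega
  · rw [mem_insert, mem_singleton]
    rcases maxPos_eq_topStart_or_topEnd hn hM with h | h <;> omega

lemma insertTop_removeTop (hn : 0 < n) (hM : IsMarking n (permFun σ) M) :
    insertTop n (topSize σ M) (removeTop (topSize σ M) σ M) = (σ, M) := by
  have := topStart_add_topSize (σ := σ) (M := M)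
  have := topEnd_lt hn hM
  have hs := topStart_le_maxPos (σ := σ) (M := M)
  refine Prod.ext (ofFun_eq_of_eqOn σ ?_) (spliceMarks_cutMarks_topStart)
  simp only [removeTop, Nat.add_sub_cancel' hs]
  refine (eqOn_splice (by omega) (eqOn_permFun_removeTop hn hM)).trans ?_
  rw [splice_cutOut fun x h₁ h₂ => ?_]
  · exact Set.eqOn_refl _ _
  have := permFun_add_dist_maxPos hn hM (x := x) ⟨h₁, by omega⟩
  rw [topRun]
  omega

end RemoveTop

section InsertTop

variable {n s : ℕ} {σ' : Equiv.Perm (Fin (n - s))} {M' : Finset ℕ} {p r : ℕ}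

lemma insertTop_snd : (insertTop n s ⟨(σ', M'), (p, r)⟩).2 = spliceMarks p s M' := rfl

lemma eqOn_permFun_insertTop (hs : 1 ≤ s) (hsn : s ≤ n) (hp : p ∈ gaps (n - s) M')
    (hr : r ∈ ({0, s - 1} : Finset ℕ)) :
    Set.EqOn (permFun (insertTop n s ⟨(σ', M'), (p, r)⟩).1)
      (splice p s (topRun n (p + r)) (permFun σ')) (Set.Iio n) := by
  rw [mem_gaps] at hp
  rw [mem_insert, mem_singleton] at hr
  show Set.EqOn (permFun (ofFun n (splice p s (topRun n (p + r)) (permFun σ')))) _ _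
  have hmaps : Set.MapsTo (permFun σ') (Set.Iio (n - s)) (Set.Iio (n - s)) :=
    fun x hx => permFun_lt σ' hx
  exact permFun_ofFun
    (mapsTo_splice (by omega) hmaps fun x h₁ h₂ => (topRun_bounds (by omega) (by omega) ⟨h₁, h₂⟩).2)
    (injOn_splice (by omega) hmaps (permFun_injOn σ')
      (fun x h₁ h₂ => (topRun_bounds (by omega) (by omega) ⟨h₁, h₂⟩).1)
      (injOn_topRun (by omega) (by omega)))

lemma maxPos_insertTop (hs : 1 ≤ s) (hsn : s ≤ n) (hp : p ∈ gaps (n - s) M')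
    (hr : r ∈ ({0, s - 1} : Finset ℕ)) : maxPos (insertTop n s ⟨(σ', M'), (p, r)⟩).1 = p + r := by
  have hf := eqOn_permFun_insertTop (σ' := σ') hs hsn hp hr
  rw [mem_gaps] at hp
  rw [mem_insert, mem_singleton] at hr
  have hpr : p + r < n := by omega
  refine maxPos_eq hpr ?_
  rw [hf hpr]
  simp [splice, topRun, Nat.dist, show ¬ p + r < p by omega, show p + r < p + s by omega]

lemma isMarking_insertTop (hs : 1 ≤ s) (hsn : s ≤ n) (hp : p ∈ gaps (n - s) M')
    (hr : r ∈ ({0, s - 1} : Finset ℕ)) (hM' : IsMarking (n - s) (permFun σ') M') :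
    IsMarking n (permFun (insertTop n s ⟨(σ', M'), (p, r)⟩).1) (spliceMarks p s M') := by
  have hf := eqOn_permFun_insertTop (σ' := σ') hs hsn hp hr
  rw [mem_gaps] at hp
  rw [mem_insert, mem_singleton] at hr
  exact (isMarking_splice hM' (by omega) hp.2
    fun q h₁ h₂ => isBond_topRun (by omega) (by omega) ⟨h₁, h₂⟩).congr hf.symm

lemma topStart_topEnd_insertTop (hs : 1 ≤ s) (hsn : s ≤ n) (hp : p ∈ gaps (n - s) M')
    (hr : r ∈ ({0, s - 1} : Finset ℕ)) :
    topStart (insertTop n s ⟨(σ', M'), (p, r)⟩).1 (insertTop n s ⟨(σ', M'), (p, r)⟩).2 = p ∧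
      topEnd (insertTop n s ⟨(σ', M'), (p, r)⟩).1 (insertTop n s ⟨(σ', M'), (p, r)⟩).2 =
        p + s - 1 := by
  have hmax := maxPos_insertTop (σ' := σ') hs hsn hp hr
  rw [mem_gaps] at hp
  rw [mem_insert, mem_singleton] at hr
  rw [topStart, topEnd, hmax, insertTop_snd]
  refine ⟨blockStart_eq (by omega) (fun q hq => ?_) fun q h₁ h₂ => ?_,
    blockEnd_eq (by omega) (fun h => ?_) fun q h₁ h₂ => ?_⟩
  · rcases mem_spliceMarks.mp hq with ⟨_, hq⟩ | _ | _
    · exact hp.2 q hq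
    all_goals omega
  · exact mem_spliceMarks.mpr (Or.inr (Or.inl ⟨h₁, by omega⟩))
  · rcases mem_spliceMarks.mp h with _ | _ | _ <;> omega
  · exact mem_spliceMarks.mpr (Or.inr (Or.inl ⟨by omega, by omega⟩))

lemma insertTop_mem {k : ℕ} (hs : 1 ≤ s) (hsn : s ≤ n) (hy : (σ', M') ∈ markedPerms (n - s) k)
    (hp : p ∈ gaps (n - s) M') (hr : r ∈ ({0, s - 1} : Finset ℕ)) :
    insertTop n s ⟨(σ', M'), (p, r)⟩ ∈
      {x ∈ markedPerms n (k + 1) | topSize x.1 x.2 = s} := by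
  obtain ⟨hM', hcard⟩ := mem_markedPerms.mp hy
  dsimp only at hM' hcard
  obtain ⟨hstart, hend⟩ := topStart_topEnd_insertTop (σ' := σ') hs hsn hp hr
  have hpn := (mem_gaps.mp hp).1
  rw [mem_filter, mem_markedPerms]
  refine ⟨⟨isMarking_insertTop hs hsn hp hr hM', ?_⟩, ?_⟩
  · rw [insertTop_snd, card_spliceMarks]
    omega
  · rw [topSize, hstart, hend]
    omega

lemma removeTop_insertTop (hs : 1 ≤ s) (hsn : s ≤ n) (hp : p ∈ gaps (n - s) M')
    (hr : r ∈ ({0, s - 1} : Finset ℕ)) :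
    removeTop s (insertTop n s ⟨(σ', M'), (p, r)⟩).1 (insertTop n s ⟨(σ', M'), (p, r)⟩).2 =
      ⟨(σ', M'), (p, r)⟩ := by
  obtain ⟨hstart, -⟩ := topStart_topEnd_insertTop (σ' := σ') hs hsn hp hr
  have hmax := maxPos_insertTop (σ' := σ') hs hsn hp hr
  have hf := eqOn_permFun_insertTop (σ' := σ') hs hsn hp hr
  rw [removeTop, hstart, hmax, Nat.add_sub_cancel_left]
  refine Sigma.ext (Prod.ext (ofFun_eq_of_eqOn σ' ?_) (cutMarks_spliceMarks p s M')) HEq.rfl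
  rw [← cutOut_splice p s (topRun n (p + r)) (permFun σ')]
  exact eqOn_cutOut hf

end InsertTop

lemma card_filter_topSize {n k s : ℕ} (hs : 1 ≤ s) (hsn : s ≤ n) :
    #{x ∈ markedPerms n (k + 1) | topSize x.1 x.2 = s} = #(insertionData n s k) := by
  refine card_bij' (fun x _ => removeTop s x.1 x.2)
    (fun y _ => insertTop n s y) ?_ ?_ ?_ ?_
  · intro x hx
    obtain ⟨hmem, rfl⟩ := mem_filter.mp hx
    obtain ⟨hM, hcard⟩ := mem_markedPerms.mp hmem
    exact removeTop_mem hM hcard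
  · rintro ⟨⟨σ', M'⟩, p, r⟩ hy
    obtain ⟨hy, hp, hr⟩ := mem_insertionData.mp hy
    exact insertTop_mem hs hsn hy hp hr
  · intro x hx
    obtain ⟨hmem, rfl⟩ := mem_filter.mp hx
    obtain ⟨hM, hcard⟩ := mem_markedPerms.mp hmem
    exact insertTop_removeTop (by omega) hM
  · rintro ⟨⟨σ', M'⟩, p, r⟩ hy
    obtain ⟨-, hp, hr⟩ := mem_insertionData.mp hy
    exact removeTop_insertTop hs hsn hp hr

lemma card_markedPerms_succ (n k : ℕ) :
    #(markedPerms n (k + 1)) =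
      ∑ s ∈ range (n + 1), runWeight s * ((k + 1) * #(markedPerms (n - s) k)) := by
  have hmaps : Set.MapsTo (fun x : Equiv.Perm (Fin n) × Finset ℕ => topSize x.1 x.2)
      (markedPerms n (k + 1)) (range (n + 1)) := by
    intro x hx
    obtain ⟨hM, hcard⟩ := mem_markedPerms.mp hx
    have := topStart_add_topSize (σ := x.1) (M := x.2)
    have := topEnd_lt (by omega) hM
    simp only [coe_range, Set.mem_Iio]
    omega
  rw [card_eq_sum_card_fiberwise hmaps]
  refine sum_congr rfl fun s hs => ?_
  rcases Nat.eq_zero_or_pos s with rfl | hs0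
  · rw [runWeight, zero_mul, card_eq_zero, filter_eq_empty_iff]
    exact fun x _ => topSize_pos.ne'
  · rw [card_filter_topSize hs0 (by simp only [mem_range] at hs; omega), card_insertionData hs0]

lemma card_markedPerms_zero (n : ℕ) : #(markedPerms n 0) = if n = 0 then 1 else 0 := by
  split_ifs with hn
  · subst hn
    refine card_eq_one.mpr ⟨(1, ∅), eq_singleton_iff_unique_mem.mpr
      ⟨mem_markedPerms.mpr ⟨fun q hq => absurd hq (notMem_empty q), rfl⟩, fun x hx => ?_⟩⟩
    obtain ⟨-, hcard⟩ := mem_markedPerms.mp hx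
    exact Prod.ext (Subsingleton.elim _ _) (card_eq_zero.mp (by omega))
  · refine card_eq_zero.mpr (eq_empty_of_forall_notMem fun x hx => ?_)
    obtain ⟨hM, hcard⟩ := mem_markedPerms.mp hx
    have := card_le_of_isMarking hM
    omega

theorem card_markedPerms (n k : ℕ) :
    #(markedPerms n k) = k.factorial * compositionWeight n k := by
  induction k generalizing n with
  | zero => rw [card_markedPerms_zero, compositionWeight, Nat.factorial_zero, one_mul]
  | succ k ih =>
    rw [card_markedPerms_succ, compositionWeight, mul_sum, Nat.factorial_succ]
    refine sum_congr rfl fun s _ => ?_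
    rw [ih]
    ring

lemma isMarking_permFun_iff {n : ℕ} (σ : Equiv.Perm (Fin n)) (M : Finset ℕ) :
    IsMarking n (permFun σ) M ↔ ∀ p ∈ M, ∃ h : p + 1 < n,
      (((σ ⟨p, by omega⟩).val : ℤ) - ((σ ⟨p + 1, h⟩).val : ℤ)).natAbs = 1 := by
  refine forall₂_congr fun p _ => ⟨fun ⟨h, hb⟩ => ⟨h, ?_⟩, fun ⟨h, hb⟩ => ⟨h, ?_⟩⟩
  · simpa [IsBond, permFun, h, show p < n by omega] using hb
  · simpa [IsBond, permFun, h, show p < n by omega] using hb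

end MarkedPerm

open MarkedPerm

open PowerSeries in
/-- the coefficient of `zⁿuᵐ` in
`A(z,u) = Σ_{k≥0} k! (z + 2z²u/(1-zu))^k` equals the number of marked
permutations `(σ, M)` with `σ ∈ S_n` and `M` a set of `m` bonds of `σ`.
(The sum may be truncated at `k = n` since the `k`-th term has `z`-order `k`.) -/
theorem stmt19 (n m : ℕ) :
    (Nat.card {x : Equiv.Perm (Fin n) × Finset ℕ //
        (∀ p ∈ x.2, ∃ h : p + 1 < n,
          (((x.1 ⟨p, by omega⟩).val : ℤ) - ((x.1 ⟨p + 1, h⟩).val : ℤ)).natAbs = 1) ∧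
        x.2.card = m} : ℚ)
      = ∑ k ∈ Finset.range (n + 1),
          (k.factorial : ℚ) *
            (PowerSeries.coeff (R := ℚ) m) ((PowerSeries.coeff (R := PowerSeries ℚ) n) (runGF ^ k)) := by
  rw [sum_factorial_mul_coeff_runGF_pow, Nat.cast_inj]
  split_ifs with hmn
  · rw [← card_markedPerms, ← Nat.card_eq_finsetCard]
    refine Nat.card_congr (Equiv.subtypeEquivRight fun x => ?_)
    rw [mem_markedPerms, isMarking_permFun_iff]
    exact and_congr_right fun _ => by omega
  · rw [Nat.card_eq_zero]
    refine Or.inl ⟨fun ⟨x, hx, hcard⟩ => ?_⟩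
    have := card_le_of_isMarking ((isMarking_permFun_iff x.1 x.2).mpr hx)
    omega
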